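/- arXiv:1312.5873 — 2 statements merged into one kernel-verified Lean document; each statement's English description precedes it below -/
import Mathlib

section
/- Let f = Σ_{i=1}^n f_i x_i^3 + Σ_{i<j} (f_{ij} x_i x_j^2 + g_{ij} x_i^2 x_j) + Σ_{i<j<k} f_{ijk} x_i x_j x_k be a homogeneous cubic polynomial with real coefficients and let r ≥ 3 be an integer. Then ((r−1)(r−2)/r^2) · f_min^{(r−3)} ≥ f_{Δ(n,r)} − (1/r) · max_{x ∈ Δ_n} [3 Σ_{i=1}^n f_i x_i^2 + Σ_{i<j} (f_{ij} + g_{ij}) x_i x_j] + (2/r^2) · min_{x ∈ Δ_n} Σ_{i=1}^n f_i x_i. -/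
/-!
Put `x = α / r` for `α ∈ I(n,r)`. Expanding the falling factorials, the Pólya numerator of `α`
is `f(α) - Q(α) + 2 L(α)`, where `Q = 3 Σ f_i x_i² + Σ_{i<j} (f_{ij} + g_{ij}) x_i x_j` and
`L = Σ f_i x_i`; by homogeneity it equals `r³ f(x) - r² Q(x) + 2 r L(x)`. Dividing by
`r^{(3)} = r (r-1) (r-2)` and scaling by `(r-1)(r-2)/r²` gives exactly
`f(x) - Q(x)/r + 2 L(x)/r²`, and `x` lies on the regular grid `Δ(n,r)`, so each term is at least
`f_{Δ(n,r)} - max Q / r + 2 min L / r²`.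
-/

open Finset

noncomputable section

/-- Falling factorial `t^(d) = t (t-1) ⋯ (t-d+1)`. -/
def fall (t : ℝ) : ℕ → ℝ
  | 0 => 1
  | d + 1 => fall t d * (t - (d : ℝ))

/-- The regular grid `Δ(n,r) = {x ∈ Δ_n : r·x ∈ ℕ^n}`. -/
def regularGrid (n r : ℕ) : Set (Fin n → ℝ) :=
  {x ∈ stdSimplex ℝ (Fin n) | ∀ i, ∃ k : ℕ, (r : ℝ) * x i = (k : ℝ)}

/-- `f_{Δ(n,r)}`, the minimum of `f` over the regular grid. -/
def minGrid (n r : ℕ) (f : (Fin n → ℝ) → ℝ) : ℝ :=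
  sInf (f '' regularGrid n r)

/-- `f̲`, the minimum of `f` over the standard simplex. -/
def minSimplex (n : ℕ) (f : (Fin n → ℝ) → ℝ) : ℝ :=
  sInf (f '' stdSimplex ℝ (Fin n))

/-- `f̄`, the maximum of `f` over the standard simplex. -/
def maxSimplex (n : ℕ) (f : (Fin n → ℝ) → ℝ) : ℝ :=
  sSup (f '' stdSimplex ℝ (Fin n))

/-- The cubic polynomial
`f = Σ_i f_i x_i³ + Σ_{i<j}(f_{ij} x_i x_j² + g_{ij} x_i² x_j) + Σ_{i<j<k} f_{ijk} x_i x_j x_k`. -/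
def cubicPoly (n : ℕ) (f1 : Fin n → ℝ) (f2 g2 : Fin n → Fin n → ℝ)
    (f3 : Fin n → Fin n → Fin n → ℝ) (x : Fin n → ℝ) : ℝ :=
  ∑ i, f1 i * x i ^ 3 +
    ∑ p ∈ Finset.univ.filter (fun p : Fin n × Fin n => p.1 < p.2),
      (f2 p.1 p.2 * x p.1 * x p.2 ^ 2 + g2 p.1 p.2 * x p.1 ^ 2 * x p.2) +
    ∑ t ∈ Finset.univ.filter (fun t : Fin n × Fin n × Fin n => t.1 < t.2.1 ∧ t.2.1 < t.2.2),
      f3 t.1 t.2.1 t.2.2 * x t.1 * x t.2.1 * x t.2.2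

/-- The Pólya-type lower bound `f_min^{(r-3)} = min_{α ∈ I(n,r)} Σ_β f_β α^{(β)} / r^{(3)}`
spelled out for the cubic polynomial `cubicPoly`. -/
def cubicPolya (n r : ℕ) (f1 : Fin n → ℝ) (f2 g2 : Fin n → Fin n → ℝ)
    (f3 : Fin n → Fin n → Fin n → ℝ) : ℝ :=
  sInf ((fun α : Fin n → ℕ =>
      (∑ i, f1 i * fall ((α i : ℕ) : ℝ) 3 +
        ∑ p ∈ Finset.univ.filter (fun p : Fin n × Fin n => p.1 < p.2),
          (f2 p.1 p.2 * (α p.1 : ℝ) * fall ((α p.2 : ℕ) : ℝ) 2 +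
            g2 p.1 p.2 * fall ((α p.1 : ℕ) : ℝ) 2 * (α p.2 : ℝ)) +
        ∑ t ∈ Finset.univ.filter (fun t : Fin n × Fin n × Fin n => t.1 < t.2.1 ∧ t.2.1 < t.2.2),
          f3 t.1 t.2.1 t.2.2 * (α t.1 : ℝ) * (α t.2.1 : ℝ) * (α t.2.2 : ℝ)) /
      fall (r : ℝ) 3) ''
    {α : Fin n → ℕ | ∑ i, α i = r})

theorem fall_two (t : ℝ) : fall t 2 = t * (t - 1) := by
  simp [fall]

theorem fall_three (t : ℝ) : fall t 3 = t * (t - 1) * (t - 2) := by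
  simp only [fall]; push_cast; ring

section SimplexExtrema

variable {n : ℕ} {f : (Fin n → ℝ) → ℝ}

theorem minSimplex_le (hf : Continuous f) {x : Fin n → ℝ} (hx : x ∈ stdSimplex ℝ (Fin n)) :
    minSimplex n f ≤ f x :=
  csInf_le ((isCompact_stdSimplex ℝ (Fin n)).image hf).bddBelow ⟨x, hx, rfl⟩

theorem le_maxSimplex (hf : Continuous f) {x : Fin n → ℝ} (hx : x ∈ stdSimplex ℝ (Fin n)) :
    f x ≤ maxSimplex n f :=
  le_csSup ((isCompact_stdSimplex ℝ (Fin n)).image hf).bddAbove ⟨x, hx, rfl⟩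

theorem regularGrid_subset_stdSimplex (r : ℕ) : regularGrid n r ⊆ stdSimplex ℝ (Fin n) :=
  fun _ hx => hx.1

theorem minGrid_le (hf : Continuous f) {r : ℕ} {x : Fin n → ℝ} (hx : x ∈ regularGrid n r) :
    minGrid n r f ≤ f x :=
  csInf_le (((isCompact_stdSimplex ℝ (Fin n)).image hf).bddBelow.mono
    (Set.image_mono (regularGrid_subset_stdSimplex r))) ⟨x, hx, rfl⟩

theorem div_mem_regularGrid {r : ℕ} (hr : r ≠ 0) {α : Fin n → ℕ} (hα : ∑ i, α i = r) :
    (fun i => (α i : ℝ) / r) ∈ regularGrid n r := by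
  have hr' : (r : ℝ) ≠ 0 := Nat.cast_ne_zero.mpr hr
  refine ⟨⟨fun i => by positivity, ?_⟩, fun i => ⟨α i, by field_simp⟩⟩
  rw [← sum_div, ← Nat.cast_sum, hα, div_self hr']

end SimplexExtrema

section CubicPoly

variable (n : ℕ) (f1 : Fin n → ℝ) (f2 g2 : Fin n → Fin n → ℝ) (f3 : Fin n → Fin n → Fin n → ℝ)

def cubicQuadPart (x : Fin n → ℝ) : ℝ :=
  3 * ∑ i, f1 i * x i ^ 2 +
    ∑ p ∈ univ.filter (fun p : Fin n × Fin n => p.1 < p.2), (f2 p.1 p.2 + g2 p.1 p.2) * x p.1 * x p.2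

/-- The numerator `Σ_β f_β α^{(β)}` in the definition of `cubicPolya`. -/
def polyaNumerator (α : Fin n → ℕ) : ℝ :=
  ∑ i, f1 i * fall ((α i : ℕ) : ℝ) 3 +
    ∑ p ∈ univ.filter (fun p : Fin n × Fin n => p.1 < p.2),
      (f2 p.1 p.2 * (α p.1 : ℝ) * fall ((α p.2 : ℕ) : ℝ) 2 +
        g2 p.1 p.2 * fall ((α p.1 : ℕ) : ℝ) 2 * (α p.2 : ℝ)) +
    ∑ t ∈ univ.filter (fun t : Fin n × Fin n × Fin n => t.1 < t.2.1 ∧ t.2.1 < t.2.2),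
      f3 t.1 t.2.1 t.2.2 * (α t.1 : ℝ) * (α t.2.1 : ℝ) * (α t.2.2 : ℝ)

theorem cubicPolya_eq (r : ℕ) :
    cubicPolya n r f1 f2 g2 f3 =
      sInf ((fun α => polyaNumerator n f1 f2 g2 f3 α / fall (r : ℝ) 3) ''
        {α : Fin n → ℕ | ∑ i, α i = r}) :=
  rfl

theorem continuous_cubicPoly : Continuous (cubicPoly n f1 f2 g2 f3) := by
  unfold cubicPoly; fun_prop

theorem continuous_cubicQuadPart : Continuous (cubicQuadPart n f1 f2 g2) := by
  unfold cubicQuadPart; fun_prop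

theorem cubicPoly_smul (c : ℝ) (x : Fin n → ℝ) :
    cubicPoly n f1 f2 g2 f3 (c • x) = c ^ 3 * cubicPoly n f1 f2 g2 f3 x := by
  simp only [cubicPoly, Pi.smul_apply, smul_eq_mul, mul_add, mul_sum]
  congr 1; congr 1
  all_goals exact sum_congr rfl fun _ _ => by ring

theorem cubicQuadPart_smul (c : ℝ) (x : Fin n → ℝ) :
    cubicQuadPart n f1 f2 g2 (c • x) = c ^ 2 * cubicQuadPart n f1 f2 g2 x := by
  simp only [cubicQuadPart, Pi.smul_apply, smul_eq_mul, mul_add, mul_sum]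
  congr 1
  all_goals exact sum_congr rfl fun _ _ => by ring

theorem polyaNumerator_eq (α : Fin n → ℕ) :
    polyaNumerator n f1 f2 g2 f3 α =
      cubicPoly n f1 f2 g2 f3 (fun i => α i) - cubicQuadPart n f1 f2 g2 (fun i => α i) +
        2 * ∑ i, f1 i * α i := by
  have h_diag : ∑ i, f1 i * fall ((α i : ℕ) : ℝ) 3 =
      ∑ i, f1 i * (α i : ℝ) ^ 3 - 3 * ∑ i, f1 i * (α i : ℝ) ^ 2 + 2 * ∑ i, f1 i * α i := by
    simp only [mul_sum, ← sum_sub_distrib, ← sum_add_distrib, fall_three]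
    exact sum_congr rfl fun _ _ => by ring
  have h_pairs : ∑ p ∈ univ.filter (fun p : Fin n × Fin n => p.1 < p.2),
        (f2 p.1 p.2 * (α p.1 : ℝ) * fall ((α p.2 : ℕ) : ℝ) 2 +
          g2 p.1 p.2 * fall ((α p.1 : ℕ) : ℝ) 2 * (α p.2 : ℝ)) =
      ∑ p ∈ univ.filter (fun p : Fin n × Fin n => p.1 < p.2),
        (f2 p.1 p.2 * (α p.1 : ℝ) * (α p.2 : ℝ) ^ 2 + g2 p.1 p.2 * (α p.1 : ℝ) ^ 2 * α p.2) -
      ∑ p ∈ univ.filter (fun p : Fin n × Fin n => p.1 < p.2),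
        (f2 p.1 p.2 + g2 p.1 p.2) * (α p.1 : ℝ) * α p.2 := by
    simp only [← sum_sub_distrib, fall_two]
    exact sum_congr rfl fun _ _ => by ring
  rw [polyaNumerator, cubicPoly, cubicQuadPart, h_diag, h_pairs]
  ring

theorem polyaNumerator_div_pow_three {r : ℕ} (hr : r ≠ 0) (α : Fin n → ℕ) :
    polyaNumerator n f1 f2 g2 f3 α / (r : ℝ) ^ 3 =
      cubicPoly n f1 f2 g2 f3 (fun i => α i / r) -
        1 / r * cubicQuadPart n f1 f2 g2 (fun i => α i / r) +
        2 / r ^ 2 * ∑ i, f1 i * (α i / r) := by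
  have hr' : (r : ℝ) ≠ 0 := Nat.cast_ne_zero.mpr hr
  have h_scale : (fun i => (α i : ℝ)) = (r : ℝ) • fun i => (α i : ℝ) / r := by
    ext i; simp [mul_div_cancel₀ _ hr']
  have h_lin : ∑ i, f1 i * (α i : ℝ) = r * ∑ i, f1 i * (α i / r) := by
    rw [mul_sum]; exact sum_congr rfl fun i _ => by field_simp
  rw [polyaNumerator_eq, h_lin, h_scale, cubicPoly_smul, cubicQuadPart_smul]
  field_simp

end CubicPoly

/-- for a cubic `f` and `r ≥ 3`,
`((r−1)(r−2)/r²) f_min^{(r−3)} ≥ f_{Δ(n,r)} − (1/r) max_{x ∈ Δ_n}[3Σ f_i x_i² + Σ_{i<j}(f_{ij}+g_{ij})x_i x_j] + (2/r²) min_{x ∈ Δ_n} Σ f_i x_i`. -/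
theorem statement6 (n r : ℕ) (hn : 0 < n) (hr : 3 ≤ r) (f1 : Fin n → ℝ)
    (f2 g2 : Fin n → Fin n → ℝ) (f3 : Fin n → Fin n → Fin n → ℝ) :
    (((r : ℝ) - 1) * ((r : ℝ) - 2) / (r : ℝ) ^ 2) * cubicPolya n r f1 f2 g2 f3 ≥
      minGrid n r (cubicPoly n f1 f2 g2 f3) -
        (1 / (r : ℝ)) * maxSimplex n (fun x =>
          3 * ∑ i, f1 i * x i ^ 2 +
            ∑ p ∈ Finset.univ.filter (fun p : Fin n × Fin n => p.1 < p.2),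
              (f2 p.1 p.2 + g2 p.1 p.2) * x p.1 * x p.2) +
        (2 / (r : ℝ) ^ 2) * minSimplex n (fun x => ∑ i, f1 i * x i) := by
  have hr0 : r ≠ 0 := by omega
  have hrR : (3 : ℝ) ≤ r := by exact_mod_cast hr
  have hc : 0 < ((r : ℝ) - 1) * ((r : ℝ) - 2) / (r : ℝ) ^ 2 := by
    apply div_pos <;> nlinarith
  rw [ge_iff_le, ← div_le_iff₀' hc, cubicPolya_eq]
  refine le_csInf ⟨_, ⟨Pi.single ⟨0, hn⟩ r, by simp, rfl⟩⟩ ?_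
  rintro _ ⟨α, hα, rfl⟩
  have h_term : ((r : ℝ) - 1) * ((r : ℝ) - 2) / (r : ℝ) ^ 2 *
      (polyaNumerator n f1 f2 g2 f3 α / fall (r : ℝ) 3) =
        polyaNumerator n f1 f2 g2 f3 α / (r : ℝ) ^ 3 := by
    have h1 : (r : ℝ) - 1 ≠ 0 := by linarith
    have h2 : (r : ℝ) - 2 ≠ 0 := by linarith
    rw [fall_three]; field_simp
  have hx := div_mem_regularGrid hr0 hα
  rw [div_le_iff₀' hc, h_term, polyaNumerator_div_pow_three n f1 f2 g2 f3 hr0]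
  gcongr ?_ - 1 / _ * ?_ + 2 / _ * ?_
  · exact minGrid_le (continuous_cubicPoly n f1 f2 g2 f3) hx
  · exact le_maxSimplex (continuous_cubicQuadPart n f1 f2 g2) hx.1
  · exact minSimplex_le (f := fun x => ∑ i, f1 i * x i) (by fun_prop) hx.1
end
end

section
/- Let f = Σ_{β ∈ I(n,d)} f_β x^β be a homogeneous polynomial of degree d ≥ 1 in n variables with real coefficients and let r ≥ d be an integer. Then f_{Δ(n,r)} − f_min^{(r−d)} ≤ [((r+d−1)^{(d)} − r^d) / r^{(d)}] · C(2d−1, d) · d^d · (f̄ − f̲), where C(2d−1,d) is the binomial coefficient and (r+d−1)^{(d)} = (r+d−1)(r+d−2)···r. -/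
open Finset

noncomputable section

/-- The homogeneous polynomial of degree `d` with coefficients `c`,
`f(x) = Σ_{β ∈ I(n,d)} c_β x^β`. -/
def homPoly (n d : ℕ) (c : (Fin n → ℕ) → ℝ) (x : Fin n → ℝ) : ℝ :=
  ∑ β ∈ Finset.Nat.antidiagonalTuple n d, c β * ∏ i, x i ^ β i

/-- The Pólya-type lower bound
`f_min^{(r-d)} = min_{α ∈ I(n,r)} Σ_{β ∈ I(n,d)} c_β α^{(β)} / r^{(d)}`. -/
def polyaBound (n d r : ℕ) (c : (Fin n → ℕ) → ℝ) : ℝ :=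
  sInf ((fun α : Fin n → ℕ =>
      (∑ β ∈ Finset.Nat.antidiagonalTuple n d,
        c β * ∏ i, fall ((α i : ℕ) : ℝ) (β i)) / fall (r : ℝ) d) ''
    {α : Fin n → ℕ | ∑ i, α i = r})

/-!
Write `f = Σ_β b_β (d!/β!) x^β` with the Bernstein coefficients `b_β = c_β β!/d!`. By homogeneity,
`g = f - f̲ (Σ xᵢ)^d` lies between `0` and `(f̄ - f̲)(Σ xᵢ)^d` on `ℕ^n`, and its mixed forward
difference `Δ^β g(0)` equals `d! (b_β - f̲)`. That difference is `g(β)` plus a signed combination of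
the `g(γ)`, `γ < β`, with weights of total size `2^d`, so all `b_β` lie in an interval of length
`(d^d + 2^(d+1) (d-1)^d)/d! · (f̄ - f̲) ≤ C(2d-1,d) d^d (f̄ - f̲)`.

If `α ∈ I(n,r)` attains the Pólya bound, then `α/r` is a grid point and
`f(α/r) - f_min^(r-d) = Σ_β b_β (u_β - v_β)` with `u_β = (d!/β!) α^β / r^d` and
`v_β = (d!/β!) α^(β) / r^(d)`, both probability vectors (the multinomial theorem for powers and
for falling factorials). As `u_β - v_β ≤ (d!/β!)(α^β - α^(β))/r^(d)`, whose total is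
`(r^d - r^(d))/r^(d) ≤ ((r+d-1)^(d) - r^d)/r^(d)`, the bound follows.
-/

lemma fall_natCast (a : ℕ) : ∀ e : ℕ, fall (a : ℝ) e = a.descFactorial e
  | 0 => by simp [fall]
  | e + 1 => by
    rw [fall, fall_natCast a e, Nat.descFactorial_succ]
    rcases le_or_gt e a with h | h
    · rw [Nat.cast_mul, Nat.cast_sub h]; ring
    · simp [Nat.descFactorial_eq_zero_iff_lt.2 h]

lemma sum_range_choose_mul_pow_eq_fwdDiff_iter (b e : ℕ) :
    ∑ g ∈ range (b + 1), (-1 : ℝ) ^ (b - g) * b.choose g * (g : ℝ) ^ e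
      = (fwdDiff 1)^[b] (fun x : ℝ => x ^ e) 0 := by
  simp [fwdDiff_iter_eq_sum_shift, zsmul_eq_mul]

section MixedFwdDiff

variable {n : ℕ}

/-- The mixed forward difference `Δ_1^{β_1} ⋯ Δ_n^{β_n} g` at the origin, with unit steps. -/
def mixedFwdDiff (β : Fin n → ℕ) (g : (Fin n → ℝ) → ℝ) : ℝ :=
  ∑ γ ∈ Iic β, (∏ i, (-1 : ℝ) ^ (β i - γ i) * (β i).choose (γ i)) * g (fun i => γ i)

lemma mixedFwdDiff_monomial (β δ : Fin n → ℕ) :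
    mixedFwdDiff β (fun x => ∏ i, x i ^ δ i) = ∏ i, (fwdDiff 1)^[β i] (fun x : ℝ => x ^ δ i) 0 := by
  simp only [mixedFwdDiff, ← sum_range_choose_mul_pow_eq_fwdDiff_iter, prod_univ_sum,
    Nat.range_succ_eq_Iic, ← prod_mul_distrib]
  rfl

lemma mixedFwdDiff_homPoly {d : ℕ} (c : (Fin n → ℕ) → ℝ) {β : Fin n → ℕ}
    (hβ : ∑ i, β i = d) :
    mixedFwdDiff β (homPoly n d c) = (∏ i, ((β i).factorial : ℝ)) * c β := by
  have hlin : mixedFwdDiff β (homPoly n d c) =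
      ∑ δ ∈ Nat.antidiagonalTuple n d, c δ * mixedFwdDiff β (fun x => ∏ i, x i ^ δ i) := by
    simp only [mixedFwdDiff, homPoly, mul_sum]
    rw [sum_comm]
    exact sum_congr rfl fun _ _ => sum_congr rfl fun _ _ => by ring
  rw [hlin, sum_eq_single_of_mem β (Nat.mem_antidiagonalTuple.2 hβ)]
  · simp only [mixedFwdDiff_monomial, fwdDiff_iter_eq_factorial, Pi.natCast_apply, mul_comm]
  · intro δ hδ hne
    obtain ⟨i, hi⟩ : ∃ i, δ i < β i := by
      by_contra! h
      refine hne (funext fun i => le_antisymm ?_ (h i))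
      have := (sum_eq_sum_iff_of_le fun i _ => h i).1
        (by rw [hβ, Nat.mem_antidiagonalTuple.1 hδ]) i (mem_univ i)
      omega
    rw [mixedFwdDiff_monomial, prod_eq_zero (mem_univ i) (by
      rw [fwdDiff_iter_pow_eq_zero_of_lt hi, Pi.zero_apply]), mul_zero]

end MixedFwdDiff

section Homogeneous

variable {n d : ℕ} (c : (Fin n → ℕ) → ℝ)

lemma continuous_homPoly : Continuous (homPoly n d c) := by
  unfold homPoly
  fun_prop

lemma homPoly_smul (t : ℝ) (x : Fin n → ℝ) : homPoly n d c (t • x) = t ^ d * homPoly n d c x := by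
  simp only [homPoly, mul_sum, Pi.smul_apply, smul_eq_mul, mul_pow, prod_mul_distrib]
  refine sum_congr rfl fun β hβ => ?_
  rw [prod_pow_eq_pow_sum, Nat.mem_antidiagonalTuple.1 hβ]
  ring

lemma minSimplex_le_homPoly {x : Fin n → ℝ} (hx : x ∈ stdSimplex ℝ (Fin n)) :
    minSimplex n (homPoly n d c) ≤ homPoly n d c x :=
  csInf_le ((isCompact_stdSimplex ℝ (Fin n)).image (continuous_homPoly c)).bddBelow ⟨x, hx, rfl⟩

lemma homPoly_le_maxSimplex {x : Fin n → ℝ} (hx : x ∈ stdSimplex ℝ (Fin n)) :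
    homPoly n d c x ≤ maxSimplex n (homPoly n d c) :=
  le_csSup ((isCompact_stdSimplex ℝ (Fin n)).image (continuous_homPoly c)).bddAbove ⟨x, hx, rfl⟩

lemma minSimplex_le_maxSimplex (hn : 0 < n) :
    minSimplex n (homPoly n d c) ≤ maxSimplex n (homPoly n d c) :=
  have hx := single_mem_stdSimplex ℝ (⟨0, hn⟩ : Fin n)
  (minSimplex_le_homPoly c hx).trans (homPoly_le_maxSimplex c hx)

lemma homPoly_mem_Icc (hd : d ≠ 0) {x : Fin n → ℝ} (hx : 0 ≤ x) :
    homPoly n d c x ∈ Set.Icc (minSimplex n (homPoly n d c) * (∑ i, x i) ^ d)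
      (maxSimplex n (homPoly n d c) * (∑ i, x i) ^ d) := by
  set s := ∑ i, x i
  rcases (sum_nonneg fun i _ => hx i : 0 ≤ s).eq_or_lt with hs | hs
  · have hx0 : x = 0 := funext fun i => (sum_eq_zero_iff_of_nonneg fun i _ => hx i).1 hs.symm i
      (mem_univ i)
    have hf0 : homPoly n d c 0 = 0 := by
      simpa [zero_pow hd] using homPoly_smul (d := d) c 0 0
    simp [s, hx0, hf0, zero_pow hd]
  · have hy : s⁻¹ • x ∈ stdSimplex ℝ (Fin n) :=
      ⟨fun i => mul_nonneg (inv_nonneg.2 hs.le) (hx i), by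
        simp [← mul_sum, s, inv_mul_cancel₀ hs.ne']⟩
    have hfx : homPoly n d c x = s ^ d * homPoly n d c (s⁻¹ • x) := by
      rw [← homPoly_smul, smul_inv_smul₀ hs.ne']
    rw [hfx, mul_comm _ (s ^ d), mul_comm _ (s ^ d)]
    exact ⟨by gcongr; exact minSimplex_le_homPoly c hy,
      by gcongr; exact homPoly_le_maxSimplex c hy⟩

end Homogeneous

section Bernstein

variable {n d : ℕ}

lemma sum_Iic_prod_choose (β : Fin n → ℕ) :
    ∑ γ ∈ Iic β, ∏ i, ((β i).choose (γ i) : ℝ) = 2 ^ ∑ i, β i := by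
  have h2 : ∀ i, (2 : ℝ) ^ β i = ∑ k ∈ Iic (β i), ((β i).choose k : ℝ) := fun i => by
    rw [← Nat.range_succ_eq_Iic]; exact_mod_cast (Nat.sum_range_choose (β i)).symm
  simp only [← prod_pow_eq_pow_sum, h2, prod_univ_sum]
  rfl

lemma abs_mixedFwdDiff_sub_le {β : Fin n → ℕ} (hβ : ∑ i, β i = d) {g : (Fin n → ℝ) → ℝ}
    {K : ℝ} (hK : 0 ≤ K) (hg : ∀ γ : Fin n → ℕ,
      g (fun i => γ i) ∈ Set.Icc 0 (K * (∑ i, (γ i : ℝ)) ^ d)) :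
    |mixedFwdDiff β g - g (fun i => β i)| ≤ 2 ^ d * ((d - 1 : ℕ) : ℝ) ^ d * K := by
  set w : (Fin n → ℕ) → ℝ := fun γ => ∏ i, (-1 : ℝ) ^ (β i - γ i) * (β i).choose (γ i)
  have hsplit : mixedFwdDiff β g - g (fun i => β i) = ∑ γ ∈ Iio β, w γ * g (fun i => γ i) := by
    rw [mixedFwdDiff, ← Iic_erase, ← add_sum_erase _ _ (mem_Iic.2 le_rfl)]
    simp [w]
  have hterm : ∀ γ ∈ Iio β, |w γ * g (fun i => γ i)|
      ≤ (∏ i, ((β i).choose (γ i) : ℝ)) * (((d - 1 : ℕ) : ℝ) ^ d * K) := by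
    intro γ hγ
    obtain ⟨hγle, i, hi⟩ := Pi.lt_def.1 (mem_Iio.1 hγ)
    have hsum : ∑ i, γ i ≤ d - 1 := by
      have := sum_lt_sum (fun i _ => hγle i) ⟨i, mem_univ i, hi⟩
      omega
    have hw : |w γ| = ∏ i, ((β i).choose (γ i) : ℝ) := by simp [w, abs_prod]
    rw [abs_mul, hw, abs_of_nonneg (hg γ).1, mul_comm _ K]
    gcongr
    exact (hg γ).2.trans (by gcongr; exact_mod_cast hsum)
  calc |mixedFwdDiff β g - g (fun i => β i)|
      ≤ ∑ γ ∈ Iio β, (∏ i, ((β i).choose (γ i) : ℝ)) * (((d - 1 : ℕ) : ℝ) ^ d * K) := by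
        rw [hsplit]; exact (abs_sum_le_sum_abs _ _).trans (sum_le_sum hterm)
    _ ≤ ∑ γ ∈ Iic β, (∏ i, ((β i).choose (γ i) : ℝ)) * (((d - 1 : ℕ) : ℝ) ^ d * K) :=
        sum_le_sum_of_subset_of_nonneg Iio_subset_Iic_self fun _ _ _ => by positivity
    _ = 2 ^ d * ((d - 1 : ℕ) : ℝ) ^ d * K := by
        rw [← sum_mul, sum_Iic_prod_choose, hβ, mul_assoc]

/-- The Bernstein coefficient `b_β = c_β β! / d!`, so that `f = Σ_β b_β (d! / β!) x^β`. -/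
def bernsteinCoeff (d : ℕ) (c : (Fin n → ℕ) → ℝ) (β : Fin n → ℕ) : ℝ :=
  c β * (∏ i, ((β i).factorial : ℝ)) / d.factorial

lemma prod_factorial_mul_multinomial {β : Fin n → ℕ} (hβ : ∑ i, β i = d) :
    (∏ i, ((β i).factorial : ℝ)) * Nat.multinomial univ β = d.factorial := by
  rw [← hβ]; exact_mod_cast Nat.multinomial_spec univ β

lemma multinomial_mul_bernsteinCoeff (c : (Fin n → ℕ) → ℝ) {β : Fin n → ℕ}
    (hβ : ∑ i, β i = d) : Nat.multinomial univ β * bernsteinCoeff d c β = c β := by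
  rw [bernsteinCoeff, ← prod_factorial_mul_multinomial hβ]
  have : (Nat.multinomial univ β : ℝ) ≠ 0 := Nat.cast_ne_zero.2 (Nat.multinomial_pos _ _).ne'
  field_simp

lemma homPoly_multinomial (x : Fin n → ℝ) :
    homPoly n d (fun β => Nat.multinomial univ β) x = (∑ i, x i) ^ d := by
  rw [homPoly, sum_pow_eq_sum_piAntidiag]
  exact sum_congr (by ext; simp [Nat.mem_antidiagonalTuple, mem_piAntidiag]) fun _ _ => rfl

lemma bernsteinCoeff_mem_Icc (hn : 0 < n) (hd : d ≠ 0) (c : (Fin n → ℕ) → ℝ)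
    {β : Fin n → ℕ} (hβ : ∑ i, β i = d) :
    let A := minSimplex n (homPoly n d c)
    let E := 2 ^ d * ((d - 1 : ℕ) : ℝ) ^ d * (maxSimplex n (homPoly n d c) - A)
    bernsteinCoeff d c β ∈ Set.Icc (A - E / d.factorial)
      (A + ((maxSimplex n (homPoly n d c) - A) * d ^ d + E) / d.factorial) := by
  intro A E
  set B := maxSimplex n (homPoly n d c)
  -- `g = f - f̲ (Σ xᵢ)^d`, written as a homogeneous polynomial for `mixedFwdDiff_homPoly`
  set g := homPoly n d (c - A • fun β => (Nat.multinomial univ β : ℝ))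
  have hg : ∀ x, g x = homPoly n d c x - A * (∑ i, x i) ^ d := fun x => by
    simp only [g, ← homPoly_multinomial, homPoly, mul_sum, ← sum_sub_distrib]
    exact sum_congr rfl fun _ _ => by simp only [Pi.sub_apply, Pi.smul_apply, smul_eq_mul]; ring
  have hgIcc : ∀ γ : Fin n → ℕ, g (fun i => γ i) ∈ Set.Icc 0 ((B - A) * (∑ i, (γ i : ℝ)) ^ d) :=
    fun γ => by
      obtain ⟨h1, h2⟩ := homPoly_mem_Icc c hd (x := fun i => (γ i : ℝ)) fun i => by positivity
      rw [hg]; constructor <;> linarith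
  have hdiff : mixedFwdDiff β g = d.factorial * (bernsteinCoeff d c β - A) := by
    rw [mixedFwdDiff_homPoly _ hβ, mul_sub, ← prod_factorial_mul_multinomial hβ, bernsteinCoeff]
    have : (d.factorial : ℝ) ≠ 0 := by positivity
    field_simp
    simp only [Pi.sub_apply, Pi.smul_apply, smul_eq_mul]
    rw [← prod_factorial_mul_multinomial hβ]
    ring
  have hAB : 0 ≤ B - A := sub_nonneg.2 (minSimplex_le_maxSimplex c hn)
  have hE := abs_le.1 (abs_mixedFwdDiff_sub_le hβ hAB hgIcc)
  have hgβ := hgIcc β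
  rw [show ∑ i, (β i : ℝ) = d by exact_mod_cast hβ] at hgβ
  have hfac : (0 : ℝ) < d.factorial := by positivity
  rw [hdiff] at hE
  constructor
  · have : A - bernsteinCoeff d c β ≤ E / d.factorial := by
      rw [le_div_iff₀ hfac]; linarith [hgβ.1]
    linarith
  · have : bernsteinCoeff d c β - A ≤ ((B - A) * d ^ d + E) / d.factorial := by
      rw [le_div_iff₀ hfac]; linarith [hgβ.2]
    linarith

end Bernstein

lemma sum_piAntidiag_prod_choose {ι : Type*} [DecidableEq ι] (s : Finset ι) (f : ι → ℕ) (m : ℕ) :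
    ∑ k ∈ s.piAntidiag m, ∏ i ∈ s, (f i).choose (k i) = (∑ i ∈ s, f i).choose m := by
  induction s using Finset.cons_induction generalizing m with
  | empty =>
    rcases Nat.eq_zero_or_pos m with rfl | hm
    · simp
    · simp [piAntidiag_empty_of_ne_zero hm.ne', Nat.choose_eq_zero_of_lt hm]
  | cons a s has ih =>
    rw [piAntidiag_cons has, sum_disjiUnion, sum_cons, Nat.add_choose_eq]
    refine sum_congr rfl fun p _ => ?_
    rw [sum_map, ← ih, mul_sum]
    refine sum_congr rfl fun g hg => ?_
    have hga : g a = 0 := by_contra fun h => has ((mem_piAntidiag.1 hg).2 a h)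
    rw [prod_cons]
    congr 1
    · simp [hga]
    · exact prod_congr rfl fun i hi => by simp [show i ≠ a from fun h => has (h ▸ hi)]

lemma sum_multinomial_mul_prod_descFactorial {n : ℕ} (d : ℕ) (α : Fin n → ℕ) :
    ∑ β ∈ Nat.antidiagonalTuple n d, Nat.multinomial univ β * ∏ i, (α i).descFactorial (β i)
      = (∑ i, α i).descFactorial d := by
  have hspec : ∀ β ∈ Nat.antidiagonalTuple n d, Nat.multinomial univ β *
      ∏ i, (α i).descFactorial (β i) = d.factorial * ∏ i, (α i).choose (β i) := fun β hβ => by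
    simp only [Nat.descFactorial_eq_factorial_mul_choose, prod_mul_distrib, ← mul_assoc]
    rw [mul_comm (Nat.multinomial _ _), Nat.multinomial_spec, Nat.mem_antidiagonalTuple.1 hβ]
  rw [sum_congr rfl hspec, ← mul_sum, Nat.descFactorial_eq_factorial_mul_choose,
    ← sum_piAntidiag_prod_choose]
  congr 2
  ext
  simp [Nat.mem_antidiagonalTuple, mem_piAntidiag]

lemma sum_mul_sub_le_of_sum_eq {ι : Type*} (s : Finset ι) {b u v q : ι → ℝ} {lo hi : ℝ}
    (hb : ∀ i ∈ s, b i ∈ Set.Icc lo hi) (huv : ∑ i ∈ s, u i = ∑ i ∈ s, v i)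
    (hq : ∀ i ∈ s, u i - v i ≤ q i) (hq0 : ∀ i ∈ s, 0 ≤ q i) :
    ∑ i ∈ s, b i * (u i - v i) ≤ (hi - lo) * ∑ i ∈ s, q i := by
  have hshift : ∑ i ∈ s, b i * (u i - v i) = ∑ i ∈ s, (b i - lo) * (u i - v i) := by
    simp only [sub_mul, sum_sub_distrib, ← mul_sum, huv, sub_self, mul_zero, sub_zero]
  rw [hshift, mul_sum]
  refine sum_le_sum fun i hi' => ?_
  have := hb i hi'
  calc (b i - lo) * (u i - v i) ≤ (b i - lo) * q i := by gcongr; linarith [this.1]; exact hq i hi'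
    _ ≤ (hi - lo) * q i := by gcongr; exacts [hq0 i hi', this.2]

section Polya

variable {n d r : ℕ}

def polyaValue (n d r : ℕ) (c : (Fin n → ℕ) → ℝ) (α : Fin n → ℕ) : ℝ :=
  (∑ β ∈ Nat.antidiagonalTuple n d, c β * ∏ i, fall ((α i : ℕ) : ℝ) (β i)) / fall (r : ℝ) d

lemma exists_polyaValue_eq_polyaBound (hn : 0 < n) (c : (Fin n → ℕ) → ℝ) :
    ∃ α : Fin n → ℕ, ∑ i, α i = r ∧ polyaValue n d r c α = polyaBound n d r c := by
  have hfin : {α : Fin n → ℕ | ∑ i, α i = r}.Finite :=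
    (Nat.antidiagonalTuple n r).finite_toSet.subset fun α hα => Nat.mem_antidiagonalTuple.2 hα
  have hne : {α : Fin n → ℕ | ∑ i, α i = r}.Nonempty := ⟨Pi.single ⟨0, hn⟩ r, by simp⟩
  exact (hne.image _).csInf_mem (hfin.image _)

lemma minGrid_le_homPoly (c : (Fin n → ℕ) → ℝ) (hr : r ≠ 0) {α : Fin n → ℕ}
    (hα : ∑ i, α i = r) : minGrid n r (homPoly n d c) ≤ homPoly n d c (fun i => α i / r) := by
  have hr' : (r : ℝ) ≠ 0 := Nat.cast_ne_zero.2 hr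
  have hsimplex : (fun i => (α i : ℝ) / r) ∈ stdSimplex ℝ (Fin n) :=
    ⟨fun i => by positivity, by rw [← sum_div, ← Nat.cast_sum, hα, div_self hr']⟩
  have hbdd : BddBelow (homPoly n d c '' regularGrid n r) :=
    ((isCompact_stdSimplex ℝ (Fin n)).image (continuous_homPoly c)).bddBelow.mono
      (Set.image_mono fun _ hx => hx.1)
  exact csInf_le hbdd ⟨_, ⟨hsimplex, fun i => ⟨α i, mul_div_cancel₀ _ hr'⟩⟩, rfl⟩

lemma homPoly_sub_polyaValue_le (c : (Fin n → ℕ) → ℝ) (hr : d ≤ r) {α : Fin n → ℕ}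
    (hα : ∑ i, α i = r) {lo hi : ℝ}
    (hb : ∀ β ∈ Nat.antidiagonalTuple n d, bernsteinCoeff d c β ∈ Set.Icc lo hi) :
    homPoly n d c (fun i => α i / r) - polyaValue n d r c α
      ≤ (hi - lo) * (((r : ℝ) ^ d - r.descFactorial d) / r.descFactorial d) := by
  set M : (Fin n → ℕ) → ℝ := fun β => Nat.multinomial univ β
  set P : (Fin n → ℕ) → ℝ := fun β => ∏ i, (α i : ℝ) ^ β i
  set D : (Fin n → ℕ) → ℝ := fun β => ∏ i, ((α i).descFactorial (β i) : ℝ)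
  set R : ℝ := (r.descFactorial d : ℝ)
  have hR : 0 < R := Nat.cast_pos.2 (Nat.descFactorial_pos.2 hr)
  have hRle : R ≤ (r : ℝ) ^ d := by simp only [R]; exact_mod_cast Nat.descFactorial_le_pow r d
  have hrd : 0 < (r : ℝ) ^ d := hR.trans_le hRle
  have hMP : ∑ β ∈ Nat.antidiagonalTuple n d, M β * P β = (r : ℝ) ^ d := by
    rw [← hα, Nat.cast_sum, ← homPoly_multinomial]; rfl
  have hMD : ∑ β ∈ Nat.antidiagonalTuple n d, M β * D β = R := by
    simp only [M, D, R, ← hα, ← sum_multinomial_mul_prod_descFactorial]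
    push_cast; rfl
  have hf : homPoly n d c (fun i => α i / r)
      = ∑ β ∈ Nat.antidiagonalTuple n d, bernsteinCoeff d c β * (M β * P β / (r : ℝ) ^ d) := by
    have hx : (fun i => (α i : ℝ) / r) = (r : ℝ)⁻¹ • fun i => (α i : ℝ) := by
      ext; simp [div_eq_inv_mul]
    rw [hx, homPoly_smul, homPoly, mul_sum]
    refine sum_congr rfl fun β hβ => ?_
    rw [← multinomial_mul_bernsteinCoeff c (Nat.mem_antidiagonalTuple.1 hβ), inv_pow]
    ring
  have hval : polyaValue n d r c α
      = ∑ β ∈ Nat.antidiagonalTuple n d, bernsteinCoeff d c β * (M β * D β / R) := by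
    simp only [polyaValue, fall_natCast, sum_div]
    refine sum_congr rfl fun β hβ => ?_
    rw [← multinomial_mul_bernsteinCoeff c (Nat.mem_antidiagonalTuple.1 hβ)]
    ring
  have huv : ∑ β ∈ Nat.antidiagonalTuple n d, M β * P β / (r : ℝ) ^ d
      = ∑ β ∈ Nat.antidiagonalTuple n d, M β * D β / R := by
    rw [← sum_div, ← sum_div, hMP, hMD, div_self hrd.ne', div_self hR.ne']
  have hDP : ∀ β, D β ≤ P β := fun β =>
    prod_le_prod (fun _ _ => by positivity) fun _ _ => by
      exact_mod_cast Nat.descFactorial_le_pow _ _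
  have hq : ∀ β ∈ Nat.antidiagonalTuple n d,
      M β * P β / (r : ℝ) ^ d - M β * D β / R ≤ M β * (P β - D β) / R := fun β _ => by
    have : M β * P β / (r : ℝ) ^ d ≤ M β * P β / R :=
      div_le_div_of_nonneg_left (by positivity) hR hRle
    rw [mul_sub, sub_div]
    linarith
  have hq0 : ∀ β ∈ Nat.antidiagonalTuple n d, 0 ≤ M β * (P β - D β) / R := fun β _ =>
    div_nonneg (mul_nonneg (by positivity) (sub_nonneg.2 (hDP β))) hR.le
  rw [hf, hval, ← sum_sub_distrib]
  simp only [← mul_sub]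
  calc _ ≤ (hi - lo) * ∑ β ∈ Nat.antidiagonalTuple n d, M β * (P β - D β) / R :=
        sum_mul_sub_le_of_sum_eq _ hb huv hq hq0
    _ = _ := by simp only [mul_sub, sub_div, sum_sub_distrib, ← sum_div, hMP, hMD]

end Polya

lemma one_add_two_pow_succ_le_pow_self {d : ℕ} (hd : 3 ≤ d) : 1 + 2 ^ (d + 1) ≤ d ^ d := by
  obtain ⟨k, rfl⟩ := Nat.exists_eq_add_of_le' (by omega : 2 ≤ d)
  have h1 : 2 ^ k ≤ 3 ^ k := Nat.pow_le_pow_left (by norm_num) k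
  have h2 : 3 ^ (k + 2) ≤ (k + 2) ^ (k + 2) := Nat.pow_le_pow_left (by omega) _
  have h3 := Nat.one_le_two_pow (n := k)
  calc 1 + 2 ^ (k + 2 + 1) = 1 + 8 * 2 ^ k := by ring
    _ ≤ 9 * 3 ^ k := by omega
    _ = 3 ^ (k + 2) := by ring
    _ ≤ (k + 2) ^ (k + 2) := h2

lemma pow_add_two_pow_succ_mul_le {d : ℕ} (hd : d ≠ 0) :
    d ^ d + 2 ^ (d + 1) * (d - 1) ^ d ≤ d.factorial * (2 * d - 1).choose d * d ^ d := by
  obtain rfl | rfl | hd3 : d = 1 ∨ d = 2 ∨ 3 ≤ d := by omega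
  · decide
  · decide
  have hdesc : d ^ d ≤ d.factorial * (2 * d - 1).choose d := by
    rw [← Nat.descFactorial_eq_factorial_mul_choose]
    simpa [show 2 * d - 1 + 1 - d = d by omega] using Nat.pow_sub_le_descFactorial (2 * d - 1) d
  have hsub : (d - 1) ^ d ≤ d ^ d := Nat.pow_le_pow_left (by omega) d
  calc d ^ d + 2 ^ (d + 1) * (d - 1) ^ d ≤ (1 + 2 ^ (d + 1)) * d ^ d := by
        rw [add_mul, one_mul]; gcongr
    _ ≤ d.factorial * (2 * d - 1).choose d * d ^ d := by
        gcongr; exact (one_add_two_pow_succ_le_pow_self hd3).trans hdesc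

lemma two_mul_pow_le_descFactorial_add_ascFactorial {r : ℕ} :
    ∀ {d : ℕ}, d ≤ r → 2 * r ^ d ≤ r.descFactorial d + r.ascFactorial d
  | 0, _ => by simp
  | d + 1, hd => by
    have ih := two_mul_pow_le_descFactorial_add_ascFactorial (Nat.le_of_succ_le hd)
    have hle : r.descFactorial d ≤ r.ascFactorial d :=
      (Nat.descFactorial_le_pow r d).trans (Nat.pow_succ_le_ascFactorial r d)
    rw [Nat.descFactorial_succ, Nat.ascFactorial_succ, pow_succ]
    obtain ⟨s, rfl⟩ := Nat.exists_eq_add_of_le (Nat.le_of_succ_le hd)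
    rw [Nat.add_sub_cancel_left]
    calc 2 * ((d + s) ^ d * (d + s))
        ≤ ((d + s).descFactorial d + (d + s).ascFactorial d) * (d + s) := by
          rw [← mul_assoc]; exact Nat.mul_le_mul_right _ ih
      _ = s * (d + s).descFactorial d + d * (d + s).descFactorial d
            + (d + s) * (d + s).ascFactorial d := by ring
      _ ≤ s * (d + s).descFactorial d + d * (d + s).ascFactorial d
            + (d + s) * (d + s).ascFactorial d := by gcongr
      _ = s * (d + s).descFactorial d + (d + s + d) * (d + s).ascFactorial d := by ring

lemma pow_sub_descFactorial_div_le {d r : ℕ} (hd : 1 ≤ d) (hr : d ≤ r) :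
    ((r : ℝ) ^ d - r.descFactorial d) / r.descFactorial d
      ≤ (fall ((r : ℝ) + (d : ℝ) - 1) d - (r : ℝ) ^ d) / fall (r : ℝ) d := by
  have hasc : fall ((r : ℝ) + (d : ℝ) - 1) d = r.ascFactorial d := by
    rw [← Nat.add_descFactorial_eq_ascFactorial', ← fall_natCast]
    push_cast [Nat.cast_sub (by omega : 1 ≤ r + d)]
    rfl
  have h : (2 : ℝ) * r ^ d ≤ r.descFactorial d + r.ascFactorial d := by
    exact_mod_cast two_mul_pow_le_descFactorial_add_ascFactorial hr
  rw [hasc, fall_natCast]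
  exact div_le_div_of_nonneg_right (by linarith) (Nat.cast_nonneg _)

lemma bernstein_width_le {d : ℕ} (hd : d ≠ 0) {K : ℝ} (hK : 0 ≤ K) :
    (K * d ^ d + 2 * (2 ^ d * ((d - 1 : ℕ) : ℝ) ^ d * K)) / d.factorial
      ≤ (2 * d - 1).choose d * d ^ d * K := by
  have h : ((d ^ d + 2 ^ (d + 1) * (d - 1) ^ d : ℕ) : ℝ)
      ≤ (d.factorial * (2 * d - 1).choose d * d ^ d : ℕ) := by
    exact_mod_cast pow_add_two_pow_succ_mul_le hd
  rw [div_le_iff₀ (by positivity)]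
  push_cast at h
  have := mul_le_mul_of_nonneg_right h hK
  rw [pow_succ] at this
  linarith

/-- for `f` homogeneous of degree `d ≥ 1` and `r ≥ d`,
`f_{Δ(n,r)} − f_min^{(r−d)} ≤ [((r+d−1)^{(d)} − r^d)/r^{(d)}] C(2d−1,d) d^d (f̄ − f̲)`. -/
theorem statement11 (n d r : ℕ) (hn : 0 < n) (hd : 1 ≤ d) (hr : d ≤ r)
    (c : (Fin n → ℕ) → ℝ) :
    minGrid n r (homPoly n d c) - polyaBound n d r c ≤
      ((fall ((r : ℝ) + (d : ℝ) - 1) d - (r : ℝ) ^ d) / fall (r : ℝ) d) *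
        (Nat.choose (2 * d - 1) d : ℝ) * (d : ℝ) ^ d *
        (maxSimplex n (homPoly n d c) - minSimplex n (homPoly n d c)) := by
  obtain ⟨α, hα, hαval⟩ := exists_polyaValue_eq_polyaBound (d := d) hn c (r := r)
  have hgrid := minGrid_le_homPoly (d := d) c (by omega) hα
  have hpolya := homPoly_sub_polyaValue_le c hr hα fun β hβ =>
    bernsteinCoeff_mem_Icc hn (by omega) c (Nat.mem_antidiagonalTuple.1 hβ)
  have hAB := sub_nonneg.2 (minSimplex_le_maxSimplex (d := d) c hn)
  have hwidth := bernstein_width_le (by omega : d ≠ 0) hAB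
  have hratio := pow_sub_descFactorial_div_le hd hr
  have hratio0 : 0 ≤ ((r : ℝ) ^ d - r.descFactorial d) / r.descFactorial d :=
    div_nonneg (sub_nonneg.2 (by exact_mod_cast Nat.descFactorial_le_pow r d)) (Nat.cast_nonneg _)
  calc minGrid n r (homPoly n d c) - polyaBound n d r c
      ≤ homPoly n d c (fun i => α i / r) - polyaValue n d r c α := by rw [← hαval]; linarith
    _ ≤ _ := hpolya
    _ ≤ (2 * d - 1).choose d * d ^ d *
          (maxSimplex n (homPoly n d c) - minSimplex n (homPoly n d c)) *
          ((fall ((r : ℝ) + (d : ℝ) - 1) d - (r : ℝ) ^ d) / fall (r : ℝ) d) := by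
        refine mul_le_mul (le_of_eq_of_le ?_ hwidth) hratio hratio0 (mul_nonneg (by positivity) hAB)
        ring
    _ = _ := by ring
end
end
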